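/- arXiv:1606.09018 — 4 statements merged into one kernel-verified Lean document; each statement's English description precedes it below -/
import Mathlib

section
/- For every poset P, the interval monoid Int(P) embeds into its enveloping group; in particular Int(P) is cancellative and 1 is its only invertible element. -/
/-! Common definitions: multifractions, divisibility, interval monoids, zigzags. -/

section Defs

variable {M : Type*}

/-- A multifraction on a monoid `M`: a finite sequence with entries alternately in `M`
(sign `true`) and in a formal disjoint copy of `M` (sign `false`). -/
structure Multifraction (M : Type*) [Monoid M] where
  entries : List (Bool × M)
  alt : entries.Chain' fun p q => p.1 ≠ q.1

/-- The product of two multifraction entry lists: merge the adjacent entries when they have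
the same sign, concatenate otherwise. -/
def mfMul [Monoid M] (l₁ l₂ : List (Bool × M)) : List (Bool × M) :=
  match l₁.getLast?, l₂ with
  | some (b, x), (c, y) :: t =>
      if b = c then l₁.dropLast ++ (b, if b then x * y else y * x) :: t else l₁ ++ l₂
  | _, _ => l₁ ++ l₂

/-- The one-entry positive multifraction. -/
def mfPos [Monoid M] (x : M) : Multifraction M := ⟨[(true, x)], List.isChain_singleton _⟩

/-- The one-entry negative multifraction. -/
def mfNeg [Monoid M] (x : M) : Multifraction M := ⟨[(false, x)], List.isChain_singleton _⟩

/-- `a` left divides `b`. -/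
def LDvd [Monoid M] (a b : M) : Prop := ∃ c, a * c = b

/-- `a` right divides `b`. -/
def RDvd [Monoid M] (a b : M) : Prop := ∃ c, c * a = b

/-- `M` is (left and right) cancellative. -/
def Cancellative (M : Type*) [Monoid M] : Prop :=
  (∀ a b c : M, a * b = a * c → b = c) ∧ (∀ a b c : M, b * a = c * a → b = c)

/-- `1` is the only invertible element of `M`. -/
def TrivialUnits (M : Type*) [Monoid M] : Prop := ∀ a : M, IsUnit a → a = 1

/-- Any two elements admit a left gcd. -/
def HasLeftGcds (M : Type*) [Monoid M] : Prop :=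
  ∀ a b : M, ∃ d, LDvd d a ∧ LDvd d b ∧ ∀ e, LDvd e a → LDvd e b → LDvd e d

/-- Any two elements admit a right gcd. -/
def HasRightGcds (M : Type*) [Monoid M] : Prop :=
  ∀ a b : M, ∃ d, RDvd d a ∧ RDvd d b ∧ ∀ e, RDvd e a → RDvd e b → RDvd e d

/-- `M` is a gcd-monoid. -/
def GcdMonoidProp (M : Type*) [Monoid M] : Prop :=
  Cancellative M ∧ TrivialUnits M ∧ HasLeftGcds M ∧ HasRightGcds M

/-- `m` is a right lcm of `u` and `v`. -/
def IsRightLcm [Monoid M] (u v m : M) : Prop :=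
  LDvd u m ∧ LDvd v m ∧ ∀ w, LDvd u w → LDvd v w → LDvd m w

/-- `m` is a left lcm of `u` and `v`. -/
def IsLeftLcm [Monoid M] (u v m : M) : Prop :=
  RDvd u m ∧ RDvd v m ∧ ∀ w, RDvd u w → RDvd v w → RDvd m w

/-- `M` is a noetherian monoid: cancellative, with trivial units, and with well-founded
proper left and right divisibility. -/
def NoetherianMonoid (M : Type*) [Monoid M] : Prop :=
  Cancellative M ∧ TrivialUnits M ∧
    WellFounded (fun a b : M => LDvd a b ∧ a ≠ b) ∧
    WellFounded (fun a b : M => RDvd a b ∧ a ≠ b)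

/-- An atom of a monoid. -/
def MonAtom [Monoid M] (a : M) : Prop :=
  a ≠ 1 ∧ ∀ b c : M, a = b * c → b = 1 ∨ c = 1

/-- `η : M →* G` exhibits `G` as the enveloping (universal) group of `M`. -/
def IsEnvelopingGroup (M : Type*) [Monoid M] (G : Type*) [Group G] (η : M →* G) : Prop :=
  ∀ (H : Type*) [Group H] (f : M →* H), ∃! g : G →* H, g.comp η = f

/-- Evaluation of a multifraction in a group `G` through `η : M →* G`. -/
def mfEval [Monoid M] {G : Type*} [Group G] (η : M →* G) (a : Multifraction M) : G :=
  (a.entries.map fun p => if p.1 then η p.2 else (η p.2)⁻¹).prod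

/-- A multifraction is trivial if all its entries equal `1`. -/
def MfTrivial [Monoid M] (a : Multifraction M) : Prop := ∀ p ∈ a.entries, p.2 = 1

/-- `a` is a proper piece of `b` (relative to a monoid structure on multifractions). -/
def Piece [Monoid M] [Monoid (Multifraction M)] (a b : Multifraction M) : Prop :=
  ∃ c d : Multifraction M, b = c * a * d ∧ ¬(MfTrivial c ∧ MfTrivial d)

/-- The `j`-th entry of a multifraction (with default `(true, 1)`). -/
def mfEntry [Monoid M] (a : Multifraction M) (j : ℕ) : Bool × M :=
  (a.entries[j]?).getD (true, 1)

/-- The reduction rule `R_{i,x}` (here `j = i - 1` is the 0-based level):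
`b = a • R_{i,x}`. -/
def RedAt [Monoid M] (a b : Multifraction M) (j : ℕ) (x : M) : Prop :=
  b.entries.length = a.entries.length ∧ j + 1 < a.entries.length ∧
  (∀ k, ¬(j - 1 ≤ k ∧ k ≤ j + 1) → b.entries[k]? = a.entries[k]?) ∧
  (∀ k, (mfEntry b k).1 = (mfEntry a k).1) ∧
  (if (mfEntry a j).1 then
     if j = 0 then
       (mfEntry b 0).2 * x = (mfEntry a 0).2 ∧ (mfEntry b 1).2 * x = (mfEntry a 1).2
     else ∃ x' : M,
       (mfEntry b (j - 1)).2 = x' * (mfEntry a (j - 1)).2 ∧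
       (mfEntry b j).2 * x = x' * (mfEntry a j).2 ∧
       IsLeftLcm x (mfEntry a j).2 ((mfEntry b j).2 * x) ∧
       (mfEntry b (j + 1)).2 * x = (mfEntry a (j + 1)).2
   else
     if j = 0 then
       x * (mfEntry b 0).2 = (mfEntry a 0).2 ∧ x * (mfEntry b 1).2 = (mfEntry a 1).2
     else ∃ x' : M,
       (mfEntry b (j - 1)).2 = (mfEntry a (j - 1)).2 * x' ∧
       x * (mfEntry b j).2 = (mfEntry a j).2 * x' ∧
       IsRightLcm x (mfEntry a j).2 (x * (mfEntry b j).2) ∧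
       x * (mfEntry b (j + 1)).2 = (mfEntry a (j + 1)).2)

/-- One reduction step. -/
def Reduces [Monoid M] (a b : Multifraction M) : Prop := ∃ j x, x ≠ 1 ∧ RedAt a b j x

/-- A multifraction is reducible if some rule `R_{i,x}` with `x ≠ 1` applies to it. -/
def Reducible [Monoid M] (a : Multifraction M) : Prop := ∃ b, Reduces a b

/-- Iterated reduction. -/
def ReducesStar [Monoid M] : Multifraction M → Multifraction M → Prop :=
  Relation.ReflTransGen Reduces

/-- Semi-convergence of reduction (relative to an enveloping group `η : M →* G`):
every unital multifraction reduces to a trivial one. -/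
def SemiConvergent [Monoid M] {G : Type*} [Group G] (η : M →* G) : Prop :=
  ∀ a : Multifraction M, mfEval η a = 1 → ∃ b, ReducesStar a b ∧ MfTrivial b

end Defs

section Interval

variable (P : Type*) [PartialOrder P]

/-- The intervals of a poset `P`. -/
def Iv := {p : P × P // p.1 ≤ p.2}

/-- The defining relations of the interval monoid of `P`. -/
def intervalRel : FreeMonoid (Iv P) → FreeMonoid (Iv P) → Prop := fun u v =>
  (∃ (x y z : P) (hxy : x ≤ y) (hyz : y ≤ z),
      u = FreeMonoid.of ⟨(x, z), hxy.trans hyz⟩ ∧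
      v = FreeMonoid.of ⟨(x, y), hxy⟩ * FreeMonoid.of ⟨(y, z), hyz⟩) ∨
  (∃ x : P, u = FreeMonoid.of ⟨(x, x), le_refl x⟩ ∧ v = 1)

/-- The interval monoid of the poset `P`. -/
def IntervalMonoid := (conGen (intervalRel P)).Quotient

instance : Monoid (IntervalMonoid P) :=
  inferInstanceAs (Monoid (conGen (intervalRel P)).Quotient)

variable {P}

/-- The generator `[x, y]` of the interval monoid. -/
def intv (I : Iv P) : IntervalMonoid P := (conGen (intervalRel P)).mk' (FreeMonoid.of I)

variable (P)

/-- `P` is a local lattice: each `P^{≥ x}` is a meet-semilattice and each `P^{≤ x}` is a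
join-semilattice. -/
def LocalLattice : Prop :=
  (∀ x a b : P, x ≤ a → x ≤ b →
      ∃ m, x ≤ m ∧ m ≤ a ∧ m ≤ b ∧ ∀ c, x ≤ c → c ≤ a → c ≤ b → c ≤ m) ∧
  (∀ x a b : P, a ≤ x → b ≤ x →
      ∃ m, m ≤ x ∧ a ≤ m ∧ b ≤ m ∧ ∀ c, c ≤ x → a ≤ c → b ≤ c → m ≤ c)

/-- Noetherianity conditions on the poset `P`: no infinite descending chain in any `P^{≥ x}`
and no infinite ascending chain in any `P^{≤ x}`. -/
def PosetNoethCond : Prop :=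
  ∀ x : P, WellFounded (fun a b : {y : P // x ≤ y} => (a : P) < (b : P)) ∧
    WellFounded (fun a b : {y : P // y ≤ x} => (b : P) < (a : P))

variable {P}

/-- A simple multifraction on the interval monoid: each entry is a proper interval, and
consecutive entries share their target (at positive positions) or source (at negative ones). -/
def MfSimple (a : Multifraction (IntervalMonoid P)) : Prop :=
  ∃ l : List (Bool × Iv P),
    a.entries = l.map (fun p => (p.1, intv p.2)) ∧
    (∀ p ∈ l, p.2.1.1 ≠ p.2.1.2) ∧
    l.Chain' fun p q => if p.1 then p.2.1.2 = q.2.1.2 else p.2.1.1 = q.2.1.1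

/-- A positive `n`-zigzag in `P`. -/
def PosZigzag (n : ℕ) (x : ℕ → P) : Prop :=
  ∀ i ≤ n, i % 2 = 0 → (1 ≤ i → x i < x (i - 1)) ∧ (i < n → x i < x (i + 1))

/-- A negative `n`-zigzag in `P`. -/
def NegZigzag (n : ℕ) (x : ℕ → P) : Prop :=
  ∀ i ≤ n, i % 2 = 1 → (1 ≤ i → x i < x (i - 1)) ∧ (i < n → x i < x (i + 1))

/-- The zigzag `x` is simple: `x₁, ..., xₙ` are pairwise distinct. -/
def SimpleZz (n : ℕ) (x : ℕ → P) : Prop :=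
  ∀ i j, 1 ≤ i → i < j → j ≤ n → x i ≠ x j

/-- Reducibility of a zigzag at level `i`. -/
def ZzRedAt (n : ℕ) (x : ℕ → P) (i : ℕ) : Prop :=
  1 ≤ i ∧ i < n ∧
  ((2 ≤ i ∧ x i < x (i + 1) ∧
      ∃ y, x i < y ∧ y ≤ x (i + 1) ∧ ∃ u, x (i - 1) ≤ u ∧ y ≤ u) ∨
   (2 ≤ i ∧ x (i + 1) < x i ∧
      ∃ y, x (i + 1) ≤ y ∧ y < x i ∧ ∃ u, u ≤ x (i - 1) ∧ u ≤ y) ∨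
   (i = 1 ∧ x 0 < x 1 ∧ ∃ y, x 0 ≤ y ∧ y < x 1 ∧ x 2 ≤ y) ∨
   (i = 1 ∧ x 1 < x 0 ∧ ∃ y, x 1 < y ∧ y ≤ x 0 ∧ y ≤ x 2))

/-- A zigzag is reducible if it is reducible at some level. -/
def ZzReducible (n : ℕ) (x : ℕ → P) : Prop := ∃ i, ZzRedAt n x i

/-- The multifraction `a` is the image of the positive `n`-zigzag `x` under the map `F`. -/
def PosImage (n : ℕ) (x : ℕ → P) (a : Multifraction (IntervalMonoid P)) : Prop :=
  a.entries.length = n ∧ ∀ j < n,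
    if j % 2 = 0 then
      ∃ h : x j ≤ x (j + 1), a.entries[j]? = some (true, intv ⟨(x j, x (j + 1)), h⟩)
    else
      ∃ h : x (j + 1) ≤ x j, a.entries[j]? = some (false, intv ⟨(x (j + 1), x j), h⟩)

/-- The multifraction `a` is the image of the negative `n`-zigzag `x` under the map `F`. -/
def NegImage (n : ℕ) (x : ℕ → P) (a : Multifraction (IntervalMonoid P)) : Prop :=
  a.entries.length = n ∧ ∀ j < n,
    if j % 2 = 0 then
      ∃ h : x (j + 1) ≤ x j, a.entries[j]? = some (false, intv ⟨(x (j + 1), x j), h⟩)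
    else
      ∃ h : x j ≤ x (j + 1), a.entries[j]? = some (true, intv ⟨(x j, x (j + 1)), h⟩)

end Interval

/-!
Words of intervals have a normal form: prepend the letters one at a time, dropping trivial
intervals and composing adjacent ones. This prepending respects the defining relations, so the
interval monoid acts on words and the normal form of an element is well defined and determines
it. Sending `[x, y]` to `x⁻¹ y` in the free group on `P` turns a normal form into a reduced word,
hence embeds the interval monoid into a group. The enveloping group only tests groups of one
fixed universe, but two elements of a free group are already separated after renaming the finitely
many generators they involve into `ℕ`.
-/

universe u v w

theorem FreeGroup.map_eq_self_of_forall_mem {α : Type*} [DecidableEq α] {f : α → α}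
    {x : FreeGroup α} (hf : ∀ p ∈ x.toWord, f p.1 = p.1) : FreeGroup.map f x = x := by
  conv_lhs => rw [← FreeGroup.mk_toWord (x := x)]
  rw [FreeGroup.map.mk, List.map_congr_left (g := id) fun p hp => by simp [hf p hp], List.map_id,
    FreeGroup.mk_toWord]

theorem FreeGroup.exists_map_nat_ne {α : Type*} {x y : FreeGroup α} (h : x ≠ y) :
    ∃ e : α → ℕ, FreeGroup.map e x ≠ FreeGroup.map e y := by
  classical
  set S := (x.toWord ++ y.toWord).map Prod.fst
  have hxS : ∀ p ∈ x.toWord, p.1 ∈ S := fun _ hp =>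
    List.mem_map_of_mem (List.mem_append_left _ hp)
  have hyS : ∀ p ∈ y.toWord, p.1 ∈ S := fun _ hp =>
    List.mem_map_of_mem (List.mem_append_right _ hp)
  obtain ⟨a₀, -⟩ : ∃ a₀, a₀ ∈ S := by
    by_contra! hS
    have hx : x.toWord = [] := List.eq_nil_iff_forall_not_mem.2 fun p hp => hS p.1 (hxS p hp)
    have hy : y.toWord = [] := List.eq_nil_iff_forall_not_mem.2 fun p hp => hS p.1 (hyS p hp)
    exact h (FreeGroup.toWord_injective (hx.trans hy.symm))
  have hret : ∀ z : FreeGroup α, (∀ p ∈ z.toWord, p.1 ∈ S) →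
      FreeGroup.map (fun n => S.getD n a₀) (FreeGroup.map S.idxOf z) = z := fun z hz => by
    rw [FreeGroup.map.comp]
    exact FreeGroup.map_eq_self_of_forall_mem fun p hp => by
      simp [List.getElem?_idxOf (hz p hp)]
  refine ⟨S.idxOf, fun he => h ?_⟩
  rw [← hret x hxS, ← hret y hyS, he]

theorem IsEnvelopingGroup.injective {M : Type u} {G : Type v} [Monoid M] [Group G] {η : M →* G}
    (hη : IsEnvelopingGroup.{u, v, w} M G η)
    (hsep : ∀ a b : M, a ≠ b → ∃ (H : Type w) (_ : Group H) (f : M →* H), f a ≠ f b) :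
    Function.Injective η := by
  intro a b hab
  by_contra hne
  obtain ⟨H, _, f, hf⟩ := hsep a b hne
  obtain ⟨g, hg, -⟩ := hη H f
  exact hf (by rw [← hg, MonoidHom.comp_apply, MonoidHom.comp_apply, hab])

theorem cancellative_of_injective {M G : Type*} [Monoid M] [Group G] (f : M →* G)
    (hf : Function.Injective f) : Cancellative M :=
  ⟨fun a b c h => hf <| mul_left_cancel (a := f a) <| by rw [← map_mul, ← map_mul, h],
    fun a b c h => hf <| mul_right_cancel (b := f a) <| by rw [← map_mul, ← map_mul, h]⟩

namespace Iv

variable {P : Type*} [PartialOrder P]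

def trans (I J : Iv P) (h : I.1.2 = J.1.1) : Iv P :=
  ⟨(I.1.1, J.1.2), (I.2.trans h.le).trans J.2⟩

theorem trans_eq_left {I J : Iv P} (h : I.1.2 = J.1.1) (hJ : J.1.1 = J.1.2) : I.trans J h = I :=
  Subtype.ext (Prod.ext rfl (hJ.symm.trans h.symm))

theorem trans_eq_right {I J : Iv P} (h : I.1.2 = J.1.1) (hI : I.1.1 = I.1.2) : I.trans J h = J :=
  Subtype.ext (Prod.ext (hI.trans h) rfl)

end Iv

namespace IntervalMonoid

variable {P : Type*} [PartialOrder P]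

section Lift

variable {M : Type*} [Monoid M] (f : Iv P → M)
  (hf : ∀ I J : Iv P, ∀ h : I.1.2 = J.1.1, f I * f J = f (I.trans J h))
  (hf₁ : ∀ I : Iv P, I.1.1 = I.1.2 → f I = 1)

def lift : IntervalMonoid P →* M :=
  Con.lift _ (FreeMonoid.lift f) <| Con.conGen_le.2 <| by
    rintro u v (⟨x, y, z, hxy, hyz, rfl, rfl⟩ | ⟨x, rfl, rfl⟩)
    · exact (hf ⟨(x, y), hxy⟩ ⟨(y, z), hyz⟩ rfl).symm
    · exact hf₁ ⟨(x, x), le_rfl⟩ rfl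

@[simp]
theorem lift_intv (I : Iv P) : lift f hf hf₁ (intv I) = f I := rfl

end Lift

theorem intv_mul_intv {I J : Iv P} (h : I.1.2 = J.1.1) : intv I * intv J = intv (I.trans J h) := by
  obtain ⟨⟨x, y⟩, hxy⟩ := I
  obtain ⟨⟨y', z⟩, hyz⟩ := J
  obtain rfl : y = y' := h
  exact ((conGen (intervalRel P)).eq.2 <|
    ConGen.Rel.of _ _ (Or.inl ⟨x, y, z, hxy, hyz, rfl, rfl⟩)).symm

theorem intv_eq_one {I : Iv P} (h : I.1.1 = I.1.2) : intv I = 1 := by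
  obtain ⟨⟨x, y⟩, hxy⟩ := I
  obtain rfl : x = y := h
  exact (conGen (intervalRel P)).eq.2 <| ConGen.Rel.of _ _ (Or.inr ⟨x, rfl, rfl⟩)

def ofWord (w : List (Iv P)) : IntervalMonoid P := (w.map intv).prod

@[simp]
theorem ofWord_nil : ofWord ([] : List (Iv P)) = 1 := rfl

@[simp]
theorem ofWord_cons (I : Iv P) (w : List (Iv P)) : ofWord (I :: w) = intv I * ofWord w := by
  simp [ofWord]

theorem exists_ofWord_eq (a : IntervalMonoid P) : ∃ w, ofWord w = a := by
  obtain ⟨u, rfl⟩ := (conGen (intervalRel P)).mk'_surjective a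
  refine ⟨u.toList, ?_⟩
  induction u using FreeMonoid.inductionOn' with
  | one => rfl
  | of_mul I u ih => rw [FreeMonoid.toList_of_mul, ofWord_cons, ih]; rfl

def IsNormal (l : List (Iv P)) : Prop :=
  (∀ I ∈ l, I.1.1 ≠ I.1.2) ∧ l.IsChain fun I J => I.1.2 ≠ J.1.1

theorem isNormal_nil : IsNormal ([] : List (Iv P)) := ⟨by simp, List.isChain_nil⟩

section NormalForm

variable [DecidableEq P]

def normCons (I : Iv P) : List (Iv P) → List (Iv P)
  | [] => if I.1.1 = I.1.2 then [] else [I]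
  | J :: t =>
      if I.1.1 = I.1.2 then J :: t
      else if h : I.1.2 = J.1.1 then I.trans J h :: t
      else I :: J :: t

theorem normCons_of_eq {I : Iv P} (h : I.1.1 = I.1.2) (l : List (Iv P)) : normCons I l = l := by
  cases l <;> simp [normCons, h]

theorem normCons_nil {I : Iv P} (h : I.1.1 ≠ I.1.2) : normCons I [] = [I] := by
  simp [normCons, h]

theorem normCons_cons_of_eq {I J : Iv P} (h : I.1.1 ≠ I.1.2) (hIJ : I.1.2 = J.1.1)
    (t : List (Iv P)) : normCons I (J :: t) = I.trans J hIJ :: t := by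
  simp only [normCons, if_neg h, dif_pos hIJ]

theorem normCons_cons_of_ne {I J : Iv P} (h : I.1.1 ≠ I.1.2) (hIJ : I.1.2 ≠ J.1.1)
    (t : List (Iv P)) : normCons I (J :: t) = I :: J :: t := by
  simp only [normCons, if_neg h, dif_neg hIJ]

theorem normCons_ne_nil {I : Iv P} (h : I.1.1 ≠ I.1.2) (l : List (Iv P)) :
    normCons I l ≠ [] := by
  cases l with
  | nil => simp [normCons_nil h]
  | cons J t =>
    by_cases hIJ : I.1.2 = J.1.1
    · simp [normCons_cons_of_eq h hIJ]
    · simp [normCons_cons_of_ne h hIJ]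

theorem normCons_normCons {I J : Iv P} (h : I.1.2 = J.1.1) (l : List (Iv P)) :
    normCons I (normCons J l) = normCons (I.trans J h) l := by
  by_cases hJ : J.1.1 = J.1.2
  · rw [normCons_of_eq hJ, Iv.trans_eq_left h hJ]
  by_cases hI : I.1.1 = I.1.2
  · rw [normCons_of_eq hI, Iv.trans_eq_right h hI]
  have hIJ : (I.trans J h).1.1 ≠ (I.trans J h).1.2 := fun h' =>
    hI (le_antisymm I.2 (h.le.trans (J.2.trans h'.ge)))
  cases l with
  | nil => rw [normCons_nil hJ, normCons_cons_of_eq hI h, normCons_nil hIJ]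
  | cons K t =>
    by_cases hJK : J.1.2 = K.1.1
    · rw [normCons_cons_of_eq hJ hJK, normCons_cons_of_eq (J := J.trans K hJK) hI h,
        normCons_cons_of_eq hIJ hJK]
      rfl
    · rw [normCons_cons_of_ne hJ hJK, normCons_cons_of_eq hI h, normCons_cons_of_ne hIJ hJK]

theorem ofWord_normCons (I : Iv P) (l : List (Iv P)) :
    ofWord (normCons I l) = intv I * ofWord l := by
  by_cases h : I.1.1 = I.1.2
  · rw [normCons_of_eq h, intv_eq_one h, one_mul]
  cases l with
  | nil => rw [normCons_nil h, ofWord_cons]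
  | cons J t =>
    by_cases hIJ : I.1.2 = J.1.1
    · rw [normCons_cons_of_eq h hIJ, ofWord_cons, ofWord_cons, ← mul_assoc, intv_mul_intv]
    · rw [normCons_cons_of_ne h hIJ, ofWord_cons]

theorem IsNormal.normCons {l : List (Iv P)} (hl : IsNormal l) (I : Iv P) :
    IsNormal (normCons I l) := by
  by_cases h : I.1.1 = I.1.2
  · rwa [normCons_of_eq h]
  cases l with
  | nil => exact ⟨by simpa [normCons_nil h] using h, by simp [normCons_nil h]⟩
  | cons J t =>
    obtain ⟨hJt, hchain⟩ := hl
    by_cases hIJ : I.1.2 = J.1.1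
    · rw [normCons_cons_of_eq h hIJ]
      refine ⟨?_, List.isChain_cons.2 (List.isChain_cons.1 hchain)⟩
      intro K hK
      rcases List.mem_cons.1 hK with rfl | hK
      · exact fun hK => h (le_antisymm I.2 (hIJ.le.trans (J.2.trans hK.ge)))
      · exact hJt K (List.mem_cons_of_mem _ hK)
    · rw [normCons_cons_of_ne h hIJ]
      exact ⟨List.forall_mem_cons.2 ⟨h, hJt⟩, List.isChain_cons_cons.2 ⟨hIJ, hchain⟩⟩

def normAct : IntervalMonoid P →* Function.End (List (Iv P)) :=
  lift normCons (fun _ _ h => funext (normCons_normCons h))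
    (fun _ h => funext (normCons_of_eq h))

theorem normAct_ofWord (w l : List (Iv P)) : normAct (ofWord w) l = w.foldr normCons l := by
  induction w with
  | nil => rfl
  | cons I w ih =>
    rw [ofWord_cons, map_mul]
    exact congrArg (normCons I) ih

theorem IsNormal.normAct {l : List (Iv P)} (hl : IsNormal l) (a : IntervalMonoid P) :
    IsNormal (normAct a l) := by
  obtain ⟨w, rfl⟩ := exists_ofWord_eq a
  rw [normAct_ofWord]
  induction w with
  | nil => exact hl
  | cons I w ih => exact ih.normCons I

theorem ofWord_normAct (a : IntervalMonoid P) (l : List (Iv P)) :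
    ofWord (normAct a l) = a * ofWord l := by
  obtain ⟨w, rfl⟩ := exists_ofWord_eq a
  rw [normAct_ofWord]
  induction w with
  | nil => simp
  | cons I w ih => rw [List.foldr_cons, ofWord_normCons, ih, ofWord_cons, mul_assoc]

def normalForm (a : IntervalMonoid P) : List (Iv P) := normAct a []

theorem isNormal_normalForm (a : IntervalMonoid P) : IsNormal (normalForm a) :=
  isNormal_nil.normAct a

theorem ofWord_normalForm (a : IntervalMonoid P) : ofWord (normalForm a) = a := by
  rw [normalForm, ofWord_normAct, ofWord_nil, mul_one]

theorem normalForm_injective : Function.Injective (normalForm (P := P)) :=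
  Function.LeftInverse.injective ofWord_normalForm

theorem eq_one_of_normAct_eq_nil {a : IntervalMonoid P} {l : List (Iv P)}
    (h : normAct a l = []) : a = 1 := by
  rw [← ofWord_normalForm a, normAct_ofWord] at h
  rw [← ofWord_normalForm a]
  cases hw : normalForm a with
  | nil => rfl
  | cons I t =>
    rw [hw, List.foldr_cons] at h
    exact absurd h (normCons_ne_nil ((isNormal_normalForm a).1 I (by simp [hw])) _)

end NormalForm

theorem trivialUnits : TrivialUnits (IntervalMonoid P) := by
  classical
  rintro a ⟨u, rfl⟩
  have h : normAct (↑u * ↑u⁻¹ : IntervalMonoid P) [] = [] := by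
    rw [Units.mul_inv, map_one]
    rfl
  rw [map_mul] at h
  exact eq_one_of_normAct_eq_nil h

def toFreeGroup : IntervalMonoid P →* FreeGroup P :=
  lift (fun I => (FreeGroup.of I.1.1)⁻¹ * FreeGroup.of I.1.2)
    (fun I J h => by simp only [Iv.trans, h]; group) (fun I h => by rw [h, inv_mul_cancel])

def freeWord (l : List (Iv P)) : List (P × Bool) :=
  l.flatMap fun I => [(I.1.1, false), (I.1.2, true)]

theorem toFreeGroup_ofWord (l : List (Iv P)) :
    toFreeGroup (ofWord l) = FreeGroup.mk (freeWord l) := by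
  induction l with
  | nil => rfl
  | cons I l ih =>
    rw [ofWord_cons, map_mul, ih, toFreeGroup, lift_intv, FreeGroup.of, FreeGroup.of,
      FreeGroup.inv_mk, FreeGroup.mul_mk, FreeGroup.mul_mk]
    rfl

theorem freeWord_injective : Function.Injective (freeWord (P := P)) := by
  intro l l' h
  induction l generalizing l' with
  | nil => cases l' <;> simp_all [freeWord]
  | cons I l ih =>
    cases l' with
    | nil => simp [freeWord] at h
    | cons J l' =>
      simp only [freeWord, List.flatMap_cons, List.cons_append, List.nil_append, List.cons.injEq,
        Prod.mk.injEq, and_true] at h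
      obtain ⟨h₁, h₂, h⟩ := h
      rw [ih h, Subtype.ext (Prod.ext h₁ h₂)]

theorem isReduced_freeWord {l : List (Iv P)} (hl : IsNormal l) :
    FreeGroup.IsReduced (freeWord l) := by
  induction l with
  | nil => exact FreeGroup.IsReduced.nil
  | cons I l ih =>
    have hI := hl.1 I (by simp)
    have hl' : IsNormal l := ⟨fun J hJ => hl.1 J (by simp [hJ]), hl.2.tail⟩
    cases l with
    | nil => simp [freeWord, FreeGroup.IsReduced, hI]
    | cons J t =>
      have hIJ : I.1.2 ≠ J.1.1 := (List.isChain_cons_cons.1 hl.2).1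
      simpa [freeWord, FreeGroup.IsReduced, hI, hIJ] using ih hl'

theorem toWord_toFreeGroup [DecidableEq P] (a : IntervalMonoid P) :
    (toFreeGroup a).toWord = freeWord (normalForm a) := by
  conv_lhs => rw [← ofWord_normalForm a]
  rw [toFreeGroup_ofWord, FreeGroup.toWord_mk,
    (isReduced_freeWord (isNormal_normalForm a)).reduce_eq]

theorem toFreeGroup_injective : Function.Injective (toFreeGroup (P := P)) := by
  classical
  intro a b h
  apply normalForm_injective
  apply freeWord_injective
  rw [← toWord_toFreeGroup, ← toWord_toFreeGroup, h]

end IntervalMonoid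

/-- The interval monoid of a poset embeds into its enveloping group; in particular it is
cancellative and `1` is its only invertible element. -/
theorem intervalMonoid_embeds_envelopingGroup (P : Type*) [PartialOrder P] :
    (∀ (G : Type*) [Group G] (η : IntervalMonoid P →* G),
        IsEnvelopingGroup (IntervalMonoid P) G η → Function.Injective η) ∧
    Cancellative (IntervalMonoid P) ∧ TrivialUnits (IntervalMonoid P) := by
  have hinj := IntervalMonoid.toFreeGroup_injective (P := P)
  refine ⟨fun G _ η hη => hη.injective fun a b hab => ?_, cancellative_of_injective _ hinj,
    IntervalMonoid.trivialUnits⟩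
  obtain ⟨e, he⟩ := FreeGroup.exists_map_nat_ne (hinj.ne hab)
  exact ⟨ULift (FreeGroup ℕ), inferInstance,
    (MulEquiv.ulift (α := FreeGroup ℕ)).symm.toMonoidHom.comp
      ((FreeGroup.map e).comp IntervalMonoid.toFreeGroup),
    fun h => he (ULift.ext_iff.1 h)⟩
end

section
/- Let P be a poset and I, J proper intervals of P. Then I left divides J in the interval monoid Int(P) if and only if I and J have the same source and the target of I is ≤ the target of J; and I right divides J in Int(P) if and only if I and J have the same target and the source of I is ≥ the source of J. -/
/-! `Int(P)` acts on `Option P` by partial maps, `[x, y]` sending `y` to `x` and everything else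
to `none` (for `x < y`). Every element then acts by a partial map that fixes
`none` and never moves a point up. Evaluating `[a, b] * w = [c, d]` at `d` forces `a = c` and
`w : d ↦ b`, hence `b ≤ d`; evaluating `w * [a, b] = [c, d]` at `d` forces `d = b` (since `w`
fixes `none`) and `w : a ↦ c`, hence `c ≤ a`. -/

def deflationaryPartialMaps (P : Type*) [Preorder P] : Submonoid (Function.End (Option P)) where
  carrier := {f | f • (none : Option P) = none ∧ ∀ p q : P, f • some p = some q → q ≤ p}
  one_mem' := ⟨rfl, fun p q h => (Option.some_injective _ h).ge⟩
  mul_mem' := by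
    rintro f g ⟨hf, hf'⟩ ⟨hg, hg'⟩
    refine ⟨by rw [mul_smul, hg, hf], fun p q h => ?_⟩
    rw [mul_smul] at h
    cases hgp : g • some p with
    | none => rw [hgp, hf] at h; cases h
    | some r => rw [hgp] at h; exact (hf' r q h).trans (hg' p r hgp)

namespace IntervalMonoid

section Action

variable {P : Type*}

open Classical in
/-- The case `x = y` is forced by the relation `[x, x] = 1`. -/
noncomputable def intervalAct (x y : P) : Function.End (Option P) :=
  fun o => if x = y then o else if o = some y then some x else none

theorem intervalAct_self (x : P) : intervalAct x x = 1 := by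
  funext o
  exact if_pos rfl

theorem intervalAct_smul_eq_some_iff {x y : P} (hxy : x ≠ y) (o : Option P) (q : P) :
    intervalAct x y • o = some q ↔ o = some y ∧ x = q := by
  simp only [intervalAct, Function.End.smul_def, if_neg hxy]
  split_ifs with ho <;> simp [ho]

theorem intervalAct_smul_eq_none_iff {x y : P} (hxy : x ≠ y) (o : Option P) :
    intervalAct x y • o = none ↔ o ≠ some y := by
  rw [← not_iff_not, ← ne_eq, Option.ne_none_iff_exists', not_not]
  simp only [intervalAct_smul_eq_some_iff hxy, exists_and_left, exists_eq', and_true]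

variable [PartialOrder P]

theorem intervalAct_mem {x y : P} (hxy : x ≤ y) :
    intervalAct x y ∈ deflationaryPartialMaps P := by
  rcases eq_or_ne x y with rfl | h
  · rw [intervalAct_self]; exact one_mem _
  refine ⟨(intervalAct_smul_eq_none_iff h _).2 (by simp), fun p q hpq => ?_⟩
  obtain ⟨hp, rfl⟩ := (intervalAct_smul_eq_some_iff h _ _).1 hpq
  exact (Option.some_injective _ hp) ▸ hxy

theorem intervalAct_trans {x y z : P} (hxy : x ≤ y) (hyz : y ≤ z) :
    intervalAct x z = intervalAct x y * intervalAct y z := by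
  rcases eq_or_ne x y with rfl | hxy'
  · rw [intervalAct_self, one_mul]
  rcases eq_or_ne y z with rfl | hyz'
  · rw [intervalAct_self, mul_one]
  have hxz : x ≠ z := fun h => hxy' (le_antisymm hxy (h ▸ hyz))
  refine eq_of_smul_eq_smul (α := Option P) fun o => Option.ext fun q => ?_
  simp only [mul_smul, intervalAct_smul_eq_some_iff hxz]
  cases hyo : intervalAct y z • o with
  | none =>
    rw [(intervalAct_smul_eq_none_iff hxy' _).2 (by simp)]
    simp only [reduceCtorEq, iff_false, not_and]
    rintro rfl -
    exact (intervalAct_smul_eq_none_iff hyz' _).1 hyo rfl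
  | some r =>
    obtain ⟨rfl, rfl⟩ := (intervalAct_smul_eq_some_iff hyz' _ _).1 hyo
    simp only [intervalAct_smul_eq_some_iff hxy', true_and]

noncomputable def act : IntervalMonoid P →* deflationaryPartialMaps P :=
  (conGen (intervalRel P)).lift
    (FreeMonoid.lift fun I => ⟨intervalAct I.1.1 I.1.2, intervalAct_mem I.2⟩) <| by
    rw [Con.conGen_le]
    rintro u v (⟨x, y, z, hxy, hyz, rfl, rfl⟩ | ⟨x, rfl, rfl⟩)
    · exact Subtype.ext (intervalAct_trans hxy hyz)
    · exact Subtype.ext (intervalAct_self x)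

end Action

variable {P : Type*} [PartialOrder P]

theorem act_intv_smul (I : Iv P) (o : Option P) :
    act (intv I) • o = intervalAct I.1.1 I.1.2 • o :=
  rfl

theorem act_smul_none (m : IntervalMonoid P) : act m • (none : Option P) = none :=
  (act m).2.1

theorem le_of_act_smul_eq_some {m : IntervalMonoid P} {p q : P} (h : act m • some p = some q) :
    q ≤ p :=
  (act m).2.2 p q h

theorem intv_mul_intv_s5 {x y z : P} (hxy : x ≤ y) (hyz : y ≤ z) :
    intv ⟨(x, y), hxy⟩ * intv ⟨(y, z), hyz⟩ = intv ⟨(x, z), hxy.trans hyz⟩ :=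
  ((conGen (intervalRel P)).eq.2
    (ConGen.Rel.of _ _ (Or.inl ⟨x, y, z, hxy, hyz, rfl, rfl⟩))).symm

end IntervalMonoid

open IntervalMonoid in
/-- Divisibility between proper intervals in the interval monoid: `I` left divides `J` iff
they share their source and the target of `I` is below that of `J`; symmetrically for right
divisibility. -/
theorem intervalMonoid_interval_dvd (P : Type*) [PartialOrder P] (I J : Iv P)
    (hI : I.1.1 ≠ I.1.2) (hJ : J.1.1 ≠ J.1.2) :
    (LDvd (intv I) (intv J) ↔ I.1.1 = J.1.1 ∧ I.1.2 ≤ J.1.2) ∧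
    (RDvd (intv I) (intv J) ↔ I.1.2 = J.1.2 ∧ J.1.1 ≤ I.1.1) := by
  have hJd : act (intv J) • some J.1.2 = some J.1.1 := by
    rw [act_intv_smul, intervalAct_smul_eq_some_iff hJ]
    exact ⟨rfl, rfl⟩
  refine ⟨⟨?_, ?_⟩, ⟨?_, ?_⟩⟩
  · rintro ⟨w, hw⟩
    rw [← hw, map_mul, mul_smul, act_intv_smul, intervalAct_smul_eq_some_iff hI] at hJd
    obtain ⟨hwJ, hIJ⟩ := hJd
    exact ⟨hIJ, le_of_act_smul_eq_some hwJ⟩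
  · obtain ⟨⟨a, b⟩, hab⟩ := I
    obtain ⟨⟨c, d⟩, hcd⟩ := J
    rintro ⟨rfl : a = c, hbd : b ≤ d⟩
    exact ⟨intv ⟨(b, d), hbd⟩, intv_mul_intv_s5 hab hbd⟩
  · rintro ⟨w, hw⟩
    rw [← hw, map_mul, mul_smul] at hJd
    obtain ⟨r, hr⟩ : ∃ r, act (intv I) • some J.1.2 = some r := by
      refine Option.ne_none_iff_exists'.1 fun hnone => ?_
      rw [hnone, act_smul_none] at hJd
      cases hJd
    rw [hr] at hJd
    rw [act_intv_smul, intervalAct_smul_eq_some_iff hI] at hr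
    obtain ⟨hJI, rfl⟩ := hr
    exact ⟨(Option.some_injective _ hJI).symm, le_of_act_smul_eq_some hJd⟩
  · obtain ⟨⟨a, b⟩, hab⟩ := I
    obtain ⟨⟨c, d⟩, hcd⟩ := J
    rintro ⟨rfl : b = d, hca : c ≤ a⟩
    exact ⟨intv ⟨(c, a), hca⟩, intv_mul_intv_s5 hca hab⟩
end

section
/- Let M be a gcd-monoid. If da = AC, db = AD, and cb = BD hold in M, then ca = BC. (That is, every gcd-monoid satisfies the Malcev quasi-identity encoded by the word L₁R₁L₁*R₁*.) -/
/-! The left gcd `e` of `d` and `A` splits `d = e d'`, `A = e A'` with `d'`, `A'` left coprime,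
and `e` cancels from the hypotheses: `d' a = A' C`, `d' b = A' D`. Left coprimality makes
`d' b` the left lcm of `b` and `D`, so their common left multiple `c b = B D` is `t d' b`.
Cancelling gives `c = t d'` and `B = t A'`, whence `c a = t d' a = t A' C = B C`. -/

section GcdMonoid

variable {M : Type*} [Monoid M]

def LeftCoprime (u v : M) : Prop := ∀ s, LDvd s u → LDvd s v → s = 1

theorem exists_leftCoprime_of_hasLeftGcds [IsLeftCancelMul M] (hu : TrivialUnits M)
    (hgcd : HasLeftGcds M) (u v : M) :
    ∃ e u' v', u = e * u' ∧ v = e * v' ∧ LeftCoprime u' v' := by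
  obtain ⟨e, ⟨u', rfl⟩, ⟨v', rfl⟩, hmax⟩ := hgcd u v
  refine ⟨e, u', v', rfl, rfl, ?_⟩
  rintro s ⟨x, rfl⟩ ⟨y, rfl⟩
  obtain ⟨g, hg⟩ := hmax (e * s) ⟨x, mul_assoc ..⟩ ⟨y, mul_assoc ..⟩
  have hsg : s * g = 1 := mul_left_cancel (a := e) (by rw [← mul_assoc, hg, mul_one])
  exact hu s (.of_mul_eq_one g hsg)

theorem isLeftLcm_of_leftCoprime [IsRightCancelMul M] (hgcd : HasRightGcds M) {u v b D : M}
    (hcop : LeftCoprime u v) (huv : u * b = v * D) : IsLeftLcm b D (u * b) := by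
  refine ⟨⟨u, rfl⟩, ⟨v, huv.symm⟩, fun w hbw hDw => ?_⟩
  -- The right gcd `g` of `w` and `u b` is a left multiple of both `b` and `D`, and the
  -- cofactor `s` in `s g = u b` is then a common left divisor of `u` and `v`.
  obtain ⟨g, hgw, ⟨s, hs⟩, hmax⟩ := hgcd w (u * b)
  obtain ⟨x, rfl⟩ := hmax b hbw ⟨u, rfl⟩
  obtain ⟨y, hy⟩ := hmax D hDw ⟨v, huv.symm⟩
  have hsu : s * x = u := mul_right_cancel (b := b) (by rw [mul_assoc, hs])
  have hsv : s * y = v := mul_right_cancel (b := D) (by rw [mul_assoc, hy, hs, huv])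
  rw [← hs, hcop s ⟨x, hsu⟩ ⟨y, hsv⟩, one_mul]
  exact hgw

end GcdMonoid

/-- Every gcd-monoid satisfies the Malcev quasi-identity encoded by `L₁R₁L₁*R₁*`. -/
theorem gcdMonoid_malcev (M : Type*) [Monoid M] (h : GcdMonoidProp M)
    (a b c d A B C D : M)
    (h1 : d * a = A * C) (h2 : d * b = A * D) (h3 : c * b = B * D) :
    c * a = B * C := by
  obtain ⟨⟨hlcan, hrcan⟩, hu, hlgcd, hrgcd⟩ := h
  have : IsCancelMul M :=
    { mul_left_cancel := fun x _ _ => hlcan x _ _, mul_right_cancel := fun x _ _ => hrcan x _ _ }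
  obtain ⟨e, d', A', rfl, rfl, hcop⟩ := exists_leftCoprime_of_hasLeftGcds hu hlgcd d A
  have ha : d' * a = A' * C := mul_left_cancel (a := e) (by simpa only [mul_assoc] using h1)
  have hb : d' * b = A' * D := mul_left_cancel (a := e) (by simpa only [mul_assoc] using h2)
  obtain ⟨t, ht⟩ := (isLeftLcm_of_leftCoprime hrgcd hcop hb).2.2 (c * b) ⟨c, rfl⟩ ⟨B, h3.symm⟩
  have hc : t * d' = c := mul_right_cancel (b := b) (by rw [mul_assoc, ht])
  have hB : t * A' = B := mul_right_cancel (b := D) (by rw [mul_assoc, ← hb, ht, h3])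
  calc c * a = t * (d' * a) := by rw [← hc, mul_assoc]
    _ = B * C := by rw [ha, ← mul_assoc, hB]
end

section
/- If M is a noetherian monoid (a cancellative monoid with no nontrivial invertible element in which proper left and right divisibility are well-founded), then the proper-piece relation on the multifraction monoid F±(M), where ā is a proper piece of b̄ if b̄ = c̄ · ā · d̄ with c̄, d̄ not both trivial, is a well-founded strict partial order. -/
/-!
If `b = c * a * d` in `F±(M)`, then either `b` is longer than `a`, or `c` and `d` have at most one
entry each and these are merged into the first and last entries of `a`. So `b` exceeds `a` in the
lexicographic order on (length, first entry, last entry), where entries are compared by proper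
two-sided divisibility, unless `c` and `d` are both trivial. Proper two-sided divisibility is
well-founded in a noetherian monoid, hence so is this lexicographic order. Transitivity needs that
a product of multifractions is trivial only if both factors are: in a cancellative monoid with
trivial units, `x * y = 1` forces `x = y = 1`.
-/

section ProperFactor

variable {M : Type*} [Monoid M]

def ProperFactor (a b : M) : Prop := ∃ x y, b = x * a * y ∧ (x ≠ 1 ∨ y ≠ 1)

lemma eq_one_and_eq_one_of_mul_eq_one (hc : Cancellative M) (hu : TrivialUnits M) {x y : M}
    (h : x * y = 1) : x = 1 ∧ y = 1 := by
  have hyx : y * x = 1 := hc.1 x _ _ (by rw [← mul_assoc, h, one_mul, mul_one])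
  have hx : x = 1 := hu x ⟨⟨x, y, h, hyx⟩, rfl⟩
  exact ⟨hx, by rwa [hx, one_mul] at h⟩

lemma properFactor_merge_left {x : M} (s : Bool) (z : M) (hx : x ≠ 1) :
    ProperFactor z (if s then x * z else z * x) := by
  cases s
  · exact ⟨1, x, by simp, Or.inr hx⟩
  · exact ⟨x, 1, by simp, Or.inl hx⟩

lemma properFactor_merge_right {x : M} (s : Bool) (z : M) (hx : x ≠ 1) :
    ProperFactor z (if s then z * x else x * z) := by
  cases s
  · exact ⟨x, 1, by simp, Or.inl hx⟩
  · exact ⟨1, x, by simp, Or.inr hx⟩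

/-- Outer induction on `b` for proper right divisibility, inner induction on the left divisors
`a = b * e` of `b` for proper left divisibility: a proper factor `a'` of `a = x * a' * y` is either
a proper left divisor of `a` (when `x = 1`) or a left divisor of the proper right divisor
`a' * y * e` of `b`. -/
theorem wellFounded_properFactor (hM : NoetherianMonoid M) :
    WellFounded (ProperFactor (M := M)) := by
  obtain ⟨hc, -, hL, hR⟩ := hM
  suffices key : ∀ b a : M, LDvd a b → Acc ProperFactor a from
    ⟨fun a => key a a ⟨1, mul_one a⟩⟩
  intro b
  induction b using hR.induction with
  | _ b IHb =>
  intro a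
  induction a using hL.induction with
  | _ a IHa =>
  rintro ⟨e, rfl⟩
  refine ⟨_, ?_⟩
  rintro a' ⟨x, y, rfl, hne⟩
  by_cases hx : x = 1
  · subst hx
    have hy : y ≠ 1 := hne.resolve_left (not_not.2 rfl)
    rw [one_mul] at IHa
    refine IHa a' ⟨⟨y, rfl⟩, fun h => hy (hc.1 a' _ _ ?_)⟩ ⟨y * e, (mul_assoc _ _ _).symm⟩
    rw [mul_one, ← h]
  · have hb : x * (a' * (y * e)) = x * a' * y * e := by simp only [mul_assoc]
    refine IHb (a' * (y * e)) ⟨⟨x, hb⟩, fun h => hx (hc.2 (a' * (y * e)) x 1 ?_)⟩ a' ⟨y * e, rfl⟩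
    rw [hb, one_mul, h]

end ProperFactor

section EntryLists

variable {M : Type*} [Monoid M]

def headVal (l : List (Bool × M)) : M := (l.head?.getD (true, 1)).2

def lastVal (l : List (Bool × M)) : M := (l.getLast?.getD (true, 1)).2

def EntriesLt : List (Bool × M) → List (Bool × M) → Prop :=
  InvImage (Prod.Lex (· < ·) (Prod.Lex ProperFactor ProperFactor))
    fun l => (l.length, headVal l, lastVal l)

theorem wellFounded_entriesLt (hM : NoetherianMonoid M) : WellFounded (EntriesLt (M := M)) :=
  InvImage.wf _ <| wellFounded_lt.prod_lex <|
    (wellFounded_properFactor hM).prod_lex (wellFounded_properFactor hM)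

lemma entriesLt_of_length_lt {l l' : List (Bool × M)} (h : l.length < l'.length) :
    EntriesLt l l' :=
  Prod.Lex.left _ _ h

lemma entriesLt_of_headVal {l l' : List (Bool × M)} (hlen : l.length = l'.length)
    (h : ProperFactor (headVal l) (headVal l')) : EntriesLt l l' :=
  Prod.lex_def.2 <| Or.inr ⟨hlen, Prod.Lex.left _ _ h⟩

lemma entriesLt_of_lastVal {l l' : List (Bool × M)} (hlen : l.length = l'.length)
    (hhead : headVal l = headVal l') (h : ProperFactor (lastVal l) (lastVal l')) :
    EntriesLt l l' :=
  Prod.lex_def.2 <| Or.inr ⟨hlen, Prod.lex_def.2 <| Or.inr ⟨hhead, h⟩⟩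

lemma mfMul_eq_append_or_merge (l₁ l₂ : List (Bool × M)) :
    mfMul l₁ l₂ = l₁ ++ l₂ ∨
      ∃ (l : List (Bool × M)) (p q : Bool × M) (t : List (Bool × M)),
        l₁ = l ++ [p] ∧ l₂ = q :: t ∧ p.1 = q.1 ∧
        mfMul l₁ l₂ = l ++ (p.1, if p.1 then p.2 * q.2 else q.2 * p.2) :: t := by
  unfold mfMul
  rcases h₁ : l₁.getLast? with _ | ⟨b, x⟩ <;> rcases h₂ : l₂ with _ | ⟨⟨c, y⟩, t⟩
  all_goals try exact Or.inl rfl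
  obtain ⟨l, rfl⟩ := List.getLast?_eq_some_iff.1 h₁
  by_cases hbc : b = c
  · exact Or.inr ⟨l, (b, x), (c, y), t, rfl, rfl, hbc, by simp [hbc]⟩
  · exact Or.inl (if_neg hbc)

lemma entriesLt_mfMul_left_or (c x : List (Bool × M)) :
    EntriesLt x (mfMul c x) ∨ ((∀ p ∈ c, p.2 = 1) ∧ mfMul c x = x) := by
  rcases mfMul_eq_append_or_merge c x with h | ⟨l, p, q, t, rfl, rfl, hpq, h⟩
  · rcases eq_or_ne c [] with rfl | hc
    · simp [h]
    · exact Or.inl <| entriesLt_of_length_lt <| by simp [h, List.length_pos_iff.2 hc]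
  rw [h]
  rcases eq_or_ne l [] with rfl | hl
  · by_cases hp : p.2 = 1
    · exact Or.inr ⟨by simp [hp], by simp [hpq, hp]⟩
    · refine Or.inl <| entriesLt_of_headVal (by simp) ?_
      simpa [headVal, hpq] using properFactor_merge_left q.1 q.2 hp
  · exact Or.inl <| entriesLt_of_length_lt <| by simp [List.length_pos_iff.2 hl]

lemma entriesLt_mfMul_right_or (x d : List (Bool × M)) :
    EntriesLt x (mfMul x d) ∨ ((∀ p ∈ d, p.2 = 1) ∧ mfMul x d = x) := by
  rcases mfMul_eq_append_or_merge x d with h | ⟨l, p, q, t, rfl, rfl, hpq, h⟩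
  · rcases eq_or_ne d [] with rfl | hd
    · simp [h]
    · exact Or.inl <| entriesLt_of_length_lt <| by simp [h, List.length_pos_iff.2 hd]
  rw [h]
  rcases eq_or_ne t [] with rfl | ht
  · by_cases hq : q.2 = 1
    · exact Or.inr ⟨by simp [hq], by simp [hq]⟩
    · have hlast := properFactor_merge_right p.1 p.2 hq
      rcases eq_or_ne l [] with rfl | hl
      · exact Or.inl <| entriesLt_of_headVal (by simp) (by simpa [headVal] using hlast)
      · refine Or.inl <| entriesLt_of_lastVal (by simp) ?_ (by simpa [lastVal] using hlast)
        obtain ⟨r, l', rfl⟩ := List.exists_cons_of_ne_nil hl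
        simp [headVal]
  · exact Or.inl <| entriesLt_of_length_lt <| by simp [List.length_pos_iff.2 ht]

lemma forall_eq_one_of_mfMul (hc : Cancellative M) (hu : TrivialUnits M)
    {l₁ l₂ : List (Bool × M)} (h : ∀ p ∈ mfMul l₁ l₂, p.2 = 1) :
    (∀ p ∈ l₁, p.2 = 1) ∧ ∀ p ∈ l₂, p.2 = 1 := by
  rcases mfMul_eq_append_or_merge l₁ l₂ with h' | ⟨l, p, q, t, rfl, rfl, -, h'⟩
  · rw [h'] at h
    simpa [or_imp, forall_and] using h
  · rw [h'] at h
    have hpq : p.2 = 1 ∧ q.2 = 1 := by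
      have hm := h _ (List.mem_append_right _ List.mem_cons_self)
      split_ifs at hm
      · exact eq_one_and_eq_one_of_mul_eq_one hc hu hm
      · exact (eq_one_and_eq_one_of_mul_eq_one hc hu hm).symm
    simp only [List.forall_mem_append, List.forall_mem_cons] at h ⊢
    exact ⟨⟨h.1, hpq.1, by simp⟩, hpq.2, h.2.2⟩

end EntryLists

section Piece

variable {M : Type*} [Monoid M] [Monoid (Multifraction M)]

lemma mfTrivial_of_mul (hc : Cancellative M) (hu : TrivialUnits M)
    (hmul : ∀ a b : Multifraction M, (a * b).entries = mfMul a.entries b.entries)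
    {a b : Multifraction M} (h : MfTrivial (a * b)) : MfTrivial a ∧ MfTrivial b :=
  forall_eq_one_of_mfMul hc hu (hmul a b ▸ h)

lemma piece_trans (hc : Cancellative M) (hu : TrivialUnits M)
    (hmul : ∀ a b : Multifraction M, (a * b).entries = mfMul a.entries b.entries)
    {a b c : Multifraction M} : Piece a b → Piece b c → Piece a c := by
  rintro ⟨c₁, d₁, rfl, hnt⟩ ⟨c₂, d₂, rfl, -⟩
  refine ⟨c₂ * c₁, d₁ * d₂, by simp only [mul_assoc], fun ⟨hc', hd'⟩ => hnt ⟨?_, ?_⟩⟩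
  · exact (mfTrivial_of_mul hc hu hmul hc').2
  · exact (mfTrivial_of_mul hc hu hmul hd').1

lemma transGen_entriesLt_of_piece
    (hmul : ∀ a b : Multifraction M, (a * b).entries = mfMul a.entries b.entries)
    {a b : Multifraction M} (h : Piece a b) :
    Relation.TransGen EntriesLt a.entries b.entries := by
  obtain ⟨c, d, rfl, hnt⟩ := h
  rw [hmul, hmul]
  rcases entriesLt_mfMul_left_or c.entries a.entries with hl | ⟨hc, hl⟩ <;>
    rcases entriesLt_mfMul_right_or (mfMul c.entries a.entries) d.entries with hr | ⟨hd, hr⟩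
  · exact .tail (.single hl) hr
  · rw [hr]
    exact .single hl
  · rw [hl] at hr ⊢
    exact .single hr
  · exact absurd ⟨hc, hd⟩ hnt

end Piece

theorem piece_wellFounded_strict_order_general (M : Type*) [Monoid M]
    [instF : Monoid (Multifraction M)]
    (hmul : ∀ a b : Multifraction M, (a * b).entries = mfMul a.entries b.entries)
    (hM : NoetherianMonoid M) :
    IsTrans (Multifraction M) Piece ∧ IsIrrefl (Multifraction M) Piece ∧
      WellFounded (Piece (M := M)) := by
  have hwf : WellFounded (Piece (M := M)) :=
    Subrelation.wf (transGen_entriesLt_of_piece hmul)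
      (InvImage.wf Multifraction.entries (wellFounded_entriesLt hM).transGen)
  exact ⟨⟨fun _ _ _ => piece_trans hM.1 hM.2.1 hmul⟩, hwf.irrefl, hwf⟩

/-- If `M` is noetherian, the proper-piece relation on the multifraction monoid is a
well-founded strict partial order. -/
theorem piece_wellFounded_strict_order (M : Type*) [Monoid M]
    [instF : Monoid (Multifraction M)]
    (hmul : ∀ a b : Multifraction M, (a * b).entries = mfMul a.entries b.entries)
    (hone : (1 : Multifraction M).entries = [])
    (hM : NoetherianMonoid M) :
    IsTrans (Multifraction M) Piece ∧ IsIrrefl (Multifraction M) Piece ∧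
      WellFounded (Piece (M := M)) :=
  piece_wellFounded_strict_order_general M (instF := instF) hmul hM
end
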